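/- Let X be a topological vector space over K (K = ℝ or ℂ), M a subset of X, and α, γ cardinals with α ≥ ℵ₀, α > γ and w(X) ≤ α. Then M is (γ,α)-dense-lineable if, and only if, M is α-infinitely (γ,α)-dense-lineable. -/

import Mathlib

/-! For the nontrivial direction, let `Y ⊇ W` be dense with `dim Y = α`. Index by a well-order `T`
of type `α.ord` together with `T ≃ T × T`, and let the second coordinate run over all nonempty
basic open sets (there are at most `α` of them). By transfinite recursion pick `v t` in the
prescribed open set and in `Y`, but outside `W ⊔ span {v s | s < t}`: that subspace has dimension
`< α = dim Y`, and a subspace containing a nonempty relatively open part of `Y` contains `Y`.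
The `v t` are then independent modulo `W`, so the subspaces `W ⊔ span {v (κ, s) | s}`, `κ ∈ T`,
are dense, `α`-dimensional, and pairwise meet in `W`. -/

universe u

open Cardinal

/-- The weight of a topological space: the smallest cardinality of a basis for its topology. -/
noncomputable def tsWeight (X : Type u) [TopologicalSpace X] : Cardinal.{u} :=
  sInf { c : Cardinal.{u} | ∃ B : Set (Set X),
    TopologicalSpace.IsTopologicalBasis B ∧ #↥B = c }

variable (𝕜 : Type) [RCLike 𝕜] {X : Type u} [AddCommGroup X] [Module 𝕜 X] [TopologicalSpace X]


/-- `M` is `(γ,β)`-dense-lineable: `M` is `γ`-lineable and every `γ`-dimensional linear subspace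
`W ⊆ M ∪ {0}` is contained in a `β`-dimensional dense linear subspace `Y ⊆ M ∪ {0}`. -/
def GBDenseLineable (M : Set X) (γ β : Cardinal.{u}) : Prop :=
  (∃ W : Submodule 𝕜 X, Module.rank 𝕜 W = γ ∧ (W : Set X) ⊆ M ∪ {0}) ∧
  ∀ W : Submodule 𝕜 X, Module.rank 𝕜 W = γ → (W : Set X) ⊆ M ∪ {0} →
    ∃ Y : Submodule 𝕜 X, W ≤ Y ∧ Dense (Y : Set X) ∧ Module.rank 𝕜 Y = β ∧
      (Y : Set X) ⊆ M ∪ {0}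

/-- `M` is `α`-infinitely `(γ,β)`-dense-lineable: `M` is `γ`-lineable and, for every
`γ`-dimensional linear subspace `W ⊆ M ∪ {0}`, there is a family `{Y_κ}_{κ<α}` of
`β`-dimensional dense linear subspaces with `W ⊆ Y_κ ⊆ M ∪ {0}` and `Y_{κ₁} ∩ Y_{κ₂} = W`
whenever `κ₁ ≠ κ₂`. -/
def InfGBDenseLineable (M : Set X) (α γ β : Cardinal.{u}) : Prop :=
  (∃ W : Submodule 𝕜 X, Module.rank 𝕜 W = γ ∧ (W : Set X) ⊆ M ∪ {0}) ∧
  ∀ W : Submodule 𝕜 X, Module.rank 𝕜 W = γ → (W : Set X) ⊆ M ∪ {0} →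
    ∃ (ι : Type u) (Y : ι → Submodule 𝕜 X), #ι = α ∧
      (∀ i, W ≤ Y i ∧ Dense (Y i : Set X) ∧ Module.rank 𝕜 (Y i) = β ∧
        (Y i : Set X) ⊆ M ∪ {0}) ∧
      ∀ i j, i ≠ j → Y i ⊓ Y j = W

section

open Set Submodule TopologicalSpace Topology

universe v

theorem linearIndependent_of_notMem_span_image_Iio {R V ι : Type*} [DivisionRing R]
    [AddCommGroup V] [Module R V] [LinearOrder ι] {v : ι → V}
    (h : ∀ i, v i ∉ span R (v '' Iio i)) : LinearIndependent R v := by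
  classical
  rw [← linearIndepOn_univ_iff]
  refine linearIndepOn_of_finite _ fun t _ ht => ?_
  lift t to Finset ι using ht
  induction t using Finset.induction_on_max with
  | empty => simp
  | insert a s hlt ih =>
    rw [Finset.coe_insert, linearIndepOn_insert fun ha => (hlt a ha).false]
    exact ⟨ih (subset_univ _),
      fun hmem => h a (span_mono (image_mono fun b hb => hlt b hb) hmem)⟩

theorem exists_fun_forall_image_Iio {T V : Type u} [LinearOrder T] [WellFoundedLT T]
    (P : T → Set V → V → Prop) (hP : ∀ t (s : Set V), #s ≤ #(Iio t) → ∃ x, P t s x) :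
    ∃ v : T → V, ∀ t, P t (v '' Iio t) (v t) := by
  have step : ∀ (t : T) (prev : ∀ s, s < t → V),
      { x // P t (range fun s : Iio t => prev s.1 s.2) x } := fun t prev =>
    Classical.indefiniteDescription _ (hP t _ mk_range_le)
  let v : T → V := IsWellFounded.fix (· < ·) fun t prev => (step t prev).1
  refine ⟨v, fun t => ?_⟩
  rw [image_eq_range, show v t = (step t fun s _ => v s).1 from IsWellFounded.fix_eq _ _ t]
  exact (step t fun s _ => v s).2

theorem TopologicalSpace.IsTopologicalBasis.exists_forall_isOpen_nonempty_and_mem_range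
    {X : Type u} {T : Type v} [TopologicalSpace X] [Nonempty X] {B : Set (Set X)}
    (hT : ℵ₀ ≤ #T) (hBT : lift.{v} #B ≤ lift.{u} #T) (hB : IsTopologicalBasis B) :
    ∃ g : T → Set X, (∀ t, IsOpen (g t) ∧ (g t).Nonempty) ∧
      ∀ U ∈ B, U.Nonempty → U ∈ range g := by
  let S := {U | U ∈ insert Set.univ B ∧ U.Nonempty}
  have : Nonempty S := ⟨⟨Set.univ, mem_insert _ _, univ_nonempty⟩⟩
  have hT' : ℵ₀ ≤ lift.{u} #T := by simpa using hT
  have hST : lift.{v} #S ≤ lift.{u} #T := calc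
    lift.{v} #S ≤ lift.{v} (#B + 1) :=
      lift_le.2 ((mk_subtype_mono fun _ h => h.1).trans mk_insert_le)
    _ ≤ lift.{u} #T := by
      rw [lift_add, lift_one]
      exact add_le_of_le hT' hBT (one_le_aleph0.trans hT')
  obtain ⟨f⟩ := lift_mk_le'.1 hST
  refine ⟨fun t => (Function.invFun f t).1, fun t => ?_, fun U hU hne => ?_⟩
  · obtain ⟨hU | hU, hne⟩ := (Function.invFun f t).2
    · exact ⟨by simp only [hU, isOpen_univ], hne⟩
    · exact ⟨hB.isOpen hU, hne⟩
  · exact ⟨f ⟨U, mem_insert_of_mem _ hU, hne⟩,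
      congrArg Subtype.val (Function.leftInverse_invFun f.injective _)⟩

theorem Submodule.le_of_isOpen_inter_subset {R M : Type*} [Ring R] [TopologicalSpace R]
    [Filter.NeBot (𝓝[{x : R | IsUnit x}] 0)] [AddCommGroup M] [Module R M] [TopologicalSpace M]
    [IsTopologicalAddGroup M] [ContinuousSMul R M] {Y S : Submodule R M} {O : Set M}
    (hO : IsOpen O) (hOY : (O ∩ Y).Nonempty) (hOS : O ∩ Y ⊆ S) : Y ≤ S := by
  rw [← comap_subtype_eq_top]
  refine eq_top_of_nonempty_interior' _ ?_
  obtain ⟨x, hxO, hxY⟩ := hOY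
  exact ⟨⟨x, hxY⟩, interior_maximal (t := ((↑) : Y → M) ⁻¹' O) (fun y hy => hOS ⟨hy, y.2⟩)
    (hO.preimage continuous_subtype_val) hxO⟩

theorem Submodule.exists_mem_inter_notMem_of_rank_lt {R M : Type*} [Ring R] [TopologicalSpace R]
    [Filter.NeBot (𝓝[{x : R | IsUnit x}] 0)] [AddCommGroup M] [Module R M] [TopologicalSpace M]
    [IsTopologicalAddGroup M] [ContinuousSMul R M] {Y S : Submodule R M} {O : Set M}
    (hO : IsOpen O) (hOY : (O ∩ Y).Nonempty) (hSY : Module.rank R S < Module.rank R Y) :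
    ∃ x ∈ O ∩ Y, x ∉ S := by
  by_contra! h
  exact (rank_mono (le_of_isOpen_inter_subset hO hOY h)).not_gt hSY

theorem Submodule.exists_linearIndependent_mkQ_forall_mem {R : Type*} {M T : Type u}
    [DivisionRing R] [TopologicalSpace R] [Filter.NeBot (𝓝[{x : R | IsUnit x}] 0)]
    [AddCommGroup M] [Module R M] [TopologicalSpace M] [IsTopologicalAddGroup M]
    [ContinuousSMul R M] [LinearOrder T] [WellFoundedLT T] {W Y : Submodule R M} {O : T → Set M}
    (hO : ∀ t, IsOpen (O t)) (hOY : ∀ t, (O t ∩ Y).Nonempty)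
    (hrank : ∀ t : T, Module.rank R W + #(Iio t) < Module.rank R Y) :
    ∃ v : T → M, (∀ t, v t ∈ O t ∩ Y) ∧ LinearIndependent R (W.mkQ ∘ v) := by
  obtain ⟨v, hv⟩ := exists_fun_forall_image_Iio (fun t s x => x ∈ O t ∩ Y ∧ x ∉ W ⊔ span R s)
    fun t s hs => exists_mem_inter_notMem_of_rank_lt (hO t) (hOY t) <| calc
      Module.rank R ↥(W ⊔ span R s) ≤ Module.rank R W + #s :=
        (rank_add_le_rank_add_rank _ _).trans (add_le_add_right (rank_span_le s) _)
      _ ≤ Module.rank R W + #(Iio t) := add_le_add_right hs _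
      _ < Module.rank R Y := hrank t
  refine ⟨v, fun t => (hv t).1, linearIndependent_of_notMem_span_image_Iio fun t h => ?_⟩
  rw [image_comp, ← map_span] at h
  exact (hv t).2 (comap_map_mkQ W _ ▸ h)

section QuotientIndependent

variable {R : Type*} {M : Type u} {ι : Type v} [DivisionRing R] [AddCommGroup M] [Module R M]
  {W : Submodule R M} {w : ι → M}

theorem Submodule.sup_span_image_eq_comap_mkQ (P : Set ι) :
    W ⊔ span R (w '' P) = comap W.mkQ (span R ((W.mkQ ∘ w) '' P)) := by
  rw [image_comp, ← map_span, comap_map_mkQ]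

theorem Submodule.sup_span_image_inf_sup_span_image (hw : LinearIndependent R (W.mkQ ∘ w))
    {P Q : Set ι} (hPQ : Disjoint P Q) :
    (W ⊔ span R (w '' P)) ⊓ (W ⊔ span R (w '' Q)) = W := by
  rw [sup_span_image_eq_comap_mkQ, sup_span_image_eq_comap_mkQ, ← comap_inf,
    (hw.disjoint_span_image hPQ).eq_bot, comap_bot, ker_mkQ]

theorem Submodule.lift_mk_le_rank_sup_span_image (hw : LinearIndependent R (W.mkQ ∘ w))
    (P : Set ι) : lift.{u} #P ≤ lift.{v} (Module.rank R ↥(W ⊔ span R (w '' P))) := by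
  have hwP := hw.comp ((↑) : P → ι) Subtype.val_injective
  have hrange : range ((W.mkQ ∘ w) ∘ ((↑) : P → ι)) = (W.mkQ ∘ w) '' P := by
    rw [range_comp, Subtype.range_coe]
  calc lift.{u} #P = lift.{v} (Module.rank R (span R ((W.mkQ ∘ w) '' P))) := by
        rw [← hrange, rank_span hwP, mk_range_eq_of_injective hwP.injective]
    _ = lift.{v} (Module.rank R (map W.mkQ (W ⊔ span R (w '' P)))) := by
        rw [sup_span_image_eq_comap_mkQ, map_comap_eq_self (by simp)]
    _ ≤ lift.{v} (Module.rank R ↥(W ⊔ span R (w '' P))) := lift_le.2 (rank_map_le _ _)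

end QuotientIndependent

theorem exists_isTopologicalBasis_mk_eq_tsWeight (Z : Type u) [TopologicalSpace Z] :
    ∃ B : Set (Set Z), IsTopologicalBasis B ∧ #B = tsWeight Z :=
  csInf_mem (s := {c | ∃ B : Set (Set Z), IsTopologicalBasis B ∧ #B = c})
    ⟨_, _, isTopologicalBasis_opens, rfl⟩

theorem Dense.exists_pairwise_inf_eq_of_mk_basis_le {R : Type*} {M : Type u} [DivisionRing R]
    [TopologicalSpace R] [Filter.NeBot (𝓝[{x : R | IsUnit x}] 0)] [AddCommGroup M] [Module R M]
    [TopologicalSpace M] [IsTopologicalAddGroup M] [ContinuousSMul R M] {α : Cardinal.{u}}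
    (hα : ℵ₀ ≤ α) {B : Set (Set M)} (hB : IsTopologicalBasis B) (hBα : #B ≤ α)
    {W Y : Submodule R M} (hWY : W ≤ Y) (hW : Module.rank R W < α) (hYd : Dense (Y : Set M))
    (hY : Module.rank R Y = α) :
    ∃ Z : α.ord.ToType → Submodule R M,
      (∀ i, W ≤ Z i ∧ Dense (Z i : Set M) ∧ Module.rank R (Z i) = α ∧ Z i ≤ Y) ∧
      Pairwise fun i j => Z i ⊓ Z j = W := by
  set T := α.ord.ToType
  have hT : #T = α := mk_ord_toType α
  have hIio : ∀ t : T, #(Iio t) < α := fun t => by simpa [T] using mk_Iio_lt t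
  obtain ⟨g, hg, hBg⟩ :=
    hB.exists_forall_isOpen_nonempty_and_mem_range (T := T) (hT ▸ hα) (by simpa [hT] using hBα)
  obtain ⟨e⟩ : Nonempty (T ≃ T × T) :=
    Cardinal.eq.1 (by rw [mk_prod, lift_id, hT, mul_eq_self hα])
  obtain ⟨v, hvY, hv⟩ := exists_linearIndependent_mkQ_forall_mem (W := W) (Y := Y)
    (O := fun t => g (e t).2) (fun t => (hg _).1)
    (fun t => hYd.inter_open_nonempty _ (hg _).1 (hg _).2)
    (fun t => hY.symm ▸ add_lt_of_lt hα hW (hIio t))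
  set w := v ∘ e.symm
  have hw : LinearIndependent R (W.mkQ ∘ w) := hv.comp _ e.symm.injective
  have hZY : ∀ i, W ⊔ span R (w '' range (Prod.mk i)) ≤ Y := fun i =>
    sup_le hWY (span_le.2 (image_subset_iff.2 fun p _ => (hvY _).2))
  refine ⟨fun i => W ⊔ span R (w '' range (Prod.mk i)),
    fun i => ⟨le_sup_left, ?_, ?_, hZY i⟩, fun i j hij => ?_⟩
  · refine hB.dense_iff.2 fun U hU hne => ?_
    obtain ⟨s, rfl⟩ := hBg U hU hne
    refine ⟨w (i, s), ?_, mem_sup_right (subset_span ⟨(i, s), ⟨s, rfl⟩, rfl⟩)⟩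
    simpa [w] using (hvY (e.symm (i, s))).1
  · refine le_antisymm (hY ▸ rank_mono (hZY i)) ?_
    have := lift_mk_le_rank_sup_span_image hw (range (Prod.mk i))
    rwa [mk_range_eq _ (Prod.mk_right_injective i), hT, Cardinal.lift_le] at this
  · exact sup_span_image_inf_sup_span_image hw
      (disjoint_left.2 fun _ ⟨_, hs⟩ ⟨_, hs'⟩ => hij (congrArg Prod.fst (hs.trans hs'.symm)))

end

/-- Let `X` be a topological vector space over `𝕜` (`𝕜 = ℝ` or `ℂ`), `M ⊆ X`
and `α, γ` cardinals with `α ≥ ℵ₀`, `α > γ` and `w(X) ≤ α`.  Then `M` is `(γ,α)`-dense-lineable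
iff `M` is `α`-infinitely `(γ,α)`-dense-lineable. -/
theorem stmt7 [IsTopologicalAddGroup X] [ContinuousSMul 𝕜 X] (M : Set X) (α γ : Cardinal.{u})
    (hα : Cardinal.aleph0 ≤ α) (hγ : γ < α) (hw : tsWeight X ≤ α) :
    GBDenseLineable 𝕜 M γ α ↔ InfGBDenseLineable 𝕜 M α γ α := by
  constructor
  · rintro ⟨hlin, hdense⟩
    refine ⟨hlin, fun W hW hWM => ?_⟩
    obtain ⟨Y, hWY, hYd, hY, hYM⟩ := hdense W hW hWM
    obtain ⟨B, hB, hBw⟩ := exists_isTopologicalBasis_mk_eq_tsWeight X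
    obtain ⟨Z, hZ, hZW⟩ :=
      hYd.exists_pairwise_inf_eq_of_mk_basis_le hα hB (hBw ▸ hw) hWY (hW ▸ hγ) hY
    exact ⟨_, Z, mk_ord_toType α, fun i => ⟨(hZ i).1, (hZ i).2.1, (hZ i).2.2.1,
      (SetLike.coe_subset_coe.2 (hZ i).2.2.2).trans hYM⟩, fun i j hij => hZW hij⟩
  · rintro ⟨hlin, hinf⟩
    refine ⟨hlin, fun W hW hWM => ?_⟩
    obtain ⟨ι, Y, hι, hY, -⟩ := hinf W hW hWM
    obtain ⟨i⟩ : Nonempty ι := mk_ne_zero_iff.1 (hι ▸ (aleph0_pos.trans_le hα).ne')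
    exact ⟨Y i, hY i⟩
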